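/- Adding independent Laplace noise Lap(0, Δ/ε) to each of k counts, where the vector of counts has ℓ¹ global sensitivity at most Δ (i.e., the sum over coordinates of the absolute coordinate differences between neighboring datasets is at most Δ), yields an ε-differentially private mechanism. -/

import Mathlib

/-!
Shifting `Lap(0, b)` by `a` changes its density `exp (-|z| / b) / (2b)` pointwise by a factor
of at most `exp (|a| / b)`, by the triangle inequality. With independent coordinates these
factors multiply, so shifting the product noise by `c` costs at most `exp (∑ |cᵢ| / b)`, and for
`c = f D - f D'` and `b = Δ / ε` the exponent is at most `ε`.
-/

open MeasureTheory
open scoped ENNReal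

/-- The centered Laplace distribution `Lap(0, b)` with scale `b`. -/
noncomputable def laplaceMeasure (b : ℝ) : Measure ℝ :=
  volume.withDensity (fun z => ENNReal.ofReal ((1 / (2 * b)) * Real.exp (-|z| / b)))

namespace MeasureTheory.Measure

theorem map_add_left_withDensity {G : Type*} [MeasurableSpace G] [AddGroup G] [MeasurableAdd G]
    (μ : Measure G) [μ.IsAddLeftInvariant] {g : G → ℝ≥0∞} (hg : Measurable g) (a : G) :
    (μ.withDensity g).map (a + ·) = μ.withDensity (fun y => g (-a + y)) := by
  ext s hs
  rw [map_apply (measurable_const_add a) hs, withDensity_apply _ (measurable_const_add a hs),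
    withDensity_apply _ hs]
  conv_rhs => rw [← map_add_left_eq_self μ a]
  rw [setLIntegral_map hs (show Measurable fun y => g (-a + y) by fun_prop)
    (measurable_const_add a)]
  simp

theorem sigmaFinite_smul_of_ne_top {α : Type*} [MeasurableSpace α] (μ : Measure α)
    [SigmaFinite μ] {c : ℝ≥0∞} (hc : c ≠ ∞) : SigmaFinite (c • μ) := by
  rw [← ENNReal.coe_toNNReal hc, ← ENNReal.smul_def]
  infer_instance

variable {ι : Type*} [Fintype ι] {α : ι → Type*} [∀ i, MeasurableSpace (α i)]

theorem pi_mono {μ ν : ∀ i, Measure (α i)} (h : ∀ i, μ i ≤ ν i) :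
    Measure.pi μ ≤ Measure.pi ν := by
  have h_outer : OuterMeasure.pi (fun i => (μ i).toOuterMeasure)
      ≤ OuterMeasure.pi (fun i => (ν i).toOuterMeasure) := by
    rw [OuterMeasure.le_pi]
    intro s _
    exact (OuterMeasure.pi_pi_le _ s).trans
      (Finset.prod_le_prod' fun i _ => le_iff'.1 (h i) (s i))
  refine le_iff.2 fun s hs => ?_
  rw [pi_def, toMeasure_apply _ _ hs, pi_def, toMeasure_apply _ _ hs]
  exact h_outer s

theorem pi_smul {c : ι → ℝ≥0∞} (hc : ∀ i, c i ≠ ∞) (μ : ∀ i, Measure (α i))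
    [∀ i, SigmaFinite (μ i)] :
    Measure.pi (fun i => c i • μ i) = (∏ i, c i) • Measure.pi μ := by
  have := fun i => sigmaFinite_smul_of_ne_top (μ i) (hc i)
  refine pi_eq fun s _ => ?_
  simp [pi_pi, Finset.prod_mul_distrib]

theorem pi_map_le_smul {μ : ∀ i, Measure (α i)} [∀ i, SigmaFinite (μ i)] {g : ∀ i, α i → α i}
    (hg : ∀ i, Measurable (g i)) {C : ι → ℝ≥0∞} (hC : ∀ i, C i ≠ ∞)
    (h : ∀ i, (μ i).map (g i) ≤ C i • μ i) :
    (Measure.pi μ).map (fun x i => g i (x i)) ≤ (∏ i, C i) • Measure.pi μ := by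
  have := fun i => sigmaFinite_smul_of_ne_top (μ i) (hC i)
  have : ∀ i, SigmaFinite ((μ i).map (g i)) := fun i => sigmaFinite_of_le _ (h i)
  calc (Measure.pi μ).map (fun x i => g i (x i))
      = Measure.pi (fun i => (μ i).map (g i)) := pi_map_pi fun i => (hg i).aemeasurable
    _ ≤ Measure.pi (fun i => C i • μ i) := pi_mono h
    _ = (∏ i, C i) • Measure.pi μ := pi_smul hC μ

end MeasureTheory.Measure

theorem Real.exp_neg_abs_sub_div_le {b : ℝ} (hb : 0 ≤ b) (a y : ℝ) :
    Real.exp (-|y - a| / b) ≤ Real.exp (|a| / b) * Real.exp (-|y| / b) := by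
  rw [← Real.exp_add, Real.exp_le_exp, ← add_div, neg_div, neg_le, ← neg_div]
  gcongr
  linarith [abs_sub_abs_le_abs_sub y a]

instance (b : ℝ) : SigmaFinite (laplaceMeasure b) := by
  unfold laplaceMeasure; infer_instance

theorem laplaceMeasure_map_add_le {b : ℝ} (hb : 0 ≤ b) (a : ℝ) :
    (laplaceMeasure b).map (a + ·) ≤ ENNReal.ofReal (Real.exp (|a| / b)) • laplaceMeasure b := by
  rw [laplaceMeasure, Measure.map_add_left_withDensity _ (by fun_prop),
    ← withDensity_smul _ (by fun_prop)]
  refine withDensity_mono (Filter.Eventually.of_forall fun y => ?_)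
  simp only [Pi.smul_apply, smul_eq_mul, neg_add_eq_sub,
    ← ENNReal.ofReal_mul (Real.exp_nonneg _)]
  refine ENNReal.ofReal_le_ofReal ?_
  calc 1 / (2 * b) * Real.exp (-|y - a| / b)
      ≤ 1 / (2 * b) * (Real.exp (|a| / b) * Real.exp (-|y| / b)) := by
        gcongr; exact Real.exp_neg_abs_sub_div_le hb a y
    _ = Real.exp (|a| / b) * (1 / (2 * b) * Real.exp (-|y| / b)) := by ring

theorem laplace_pi_map_add_le {ι : Type*} [Fintype ι] {b : ℝ} (hb : 0 ≤ b) (c : ι → ℝ) :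
    (Measure.pi fun _ : ι => laplaceMeasure b).map (c + ·) ≤
      ENNReal.ofReal (Real.exp ((∑ i, |c i|) / b)) • Measure.pi fun _ : ι => laplaceMeasure b := by
  rw [Finset.sum_div, Real.exp_sum, ENNReal.ofReal_prod_of_nonneg fun i _ => (Real.exp_pos _).le]
  exact Measure.pi_map_le_smul (fun i => measurable_const_add (c i))
    (fun _ => ENNReal.ofReal_ne_top) fun i => laplaceMeasure_map_add_le hb (c i)

theorem laplace_vector_mechanism_dp_general {X : Type*} {k : ℕ}
    (neighbor : X → X → Prop) (f : X → (Fin k → ℝ)) (Δ ε : ℝ)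
    (hε : 0 < ε)
    (hsens : ∀ D D', neighbor D D' → ∑ i, |f D i - f D' i| ≤ Δ)
    (M : X → Measure (Fin k → ℝ))
    (hM : ∀ D, M D = (Measure.pi (fun _ : Fin k => laplaceMeasure (Δ / ε))).map
      (fun z i => f D i + z i)) :
    ∀ D D', neighbor D D' → ∀ S : Set (Fin k → ℝ), MeasurableSet S →
      M D S ≤ ENNReal.ofReal (Real.exp ε) * M D' S := by
  intro D D' hDD' S _
  set L := Measure.pi fun _ : Fin k => laplaceMeasure (Δ / ε)
  have hM' : ∀ E, M E = L.map (f E + ·) := hM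
  have hsum := hsens D D' hDD'
  have hΔ : 0 ≤ Δ := (Finset.sum_nonneg fun i _ => abs_nonneg _).trans hsum
  have hexp : (∑ i, |f D i - f D' i|) / (Δ / ε) ≤ ε := by
    rw [div_div_eq_mul_div]
    exact div_le_of_le_mul₀ hΔ hε.le (by rw [mul_comm ε]; gcongr)
  have hshift : M D = (L.map (f D - f D' + ·)).map (f D' + ·) := by
    rw [hM', Measure.map_map (measurable_const_add _) (measurable_const_add _)]
    congr 1
    funext z
    simp only [Function.comp_apply]
    abel
  have hle : M D ≤ ENNReal.ofReal (Real.exp ε) • M D' := by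
    rw [hshift, hM' D', ← Measure.map_smul]
    refine Measure.map_mono ?_ (measurable_const_add _)
    refine (laplace_pi_map_add_le (div_nonneg hΔ hε.le) _).trans ?_
    gcongr
    exact hexp
  exact hle S

/-- Adding i.i.d. `Lap(0, Δ/ε)` noise to each coordinate of a `k`-dimensional count
query with ℓ¹ global sensitivity `Δ` gives an `ε`-differentially private mechanism. -/
theorem laplace_vector_mechanism_dp {X : Type*} {k : ℕ}
    (neighbor : X → X → Prop) (f : X → (Fin k → ℝ)) (Δ ε : ℝ)
    (hΔ : 0 < Δ) (hε : 0 < ε)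
    (hsens : ∀ D D', neighbor D D' → ∑ i, |f D i - f D' i| ≤ Δ)
    (M : X → Measure (Fin k → ℝ))
    (hM : ∀ D, M D = (Measure.pi (fun _ : Fin k => laplaceMeasure (Δ / ε))).map
      (fun z i => f D i + z i)) :
    ∀ D D', neighbor D D' → ∀ S : Set (Fin k → ℝ), MeasurableSet S →
      M D S ≤ ENNReal.ofReal (Real.exp ε) * M D' S :=
  laplace_vector_mechanism_dp_general neighbor f Δ ε hε hsens M hM
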